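/- Let M ∈ ℝ^{n×n}, let Q ∈ ℝ^{n×n} be symmetric positive definite, and let P ∈ ℝ^{n×n} be symmetric positive semidefinite such that P − Q − MᵀPM is positive semidefinite (Loewner order P ⪰ Q + MᵀPM). Then λ_max(P) ≥ λ_min(Q) > 0 and the spectral radius of M satisfies ρ(M)² ≤ 1 − λ_min(Q)/λ_max(P); in particular ρ(M) < 1. -/

import Mathlib

noncomputable section

open Matrix

/-- Spectral radius of a real square matrix: supremum of the moduli of its complex eigenvalues. -/
def specRad {n : ℕ} (M : Matrix (Fin n) (Fin n) ℝ) : ℝ :=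
  sSup ((fun μ : ℂ => ‖μ‖) '' spectrum ℂ (M.map (algebraMap ℝ ℂ)))

/-- Smallest eigenvalue of a (symmetric) real matrix, as the infimum of its real spectrum. -/
def eigMin {n : ℕ} (A : Matrix (Fin n) (Fin n) ℝ) : ℝ := sInf (spectrum ℝ A)

/-- Largest eigenvalue of a (symmetric) real matrix, as the supremum of its real spectrum. -/
def eigMax {n : ℕ} (A : Matrix (Fin n) (Fin n) ℝ) : ℝ := sSup (spectrum ℝ A)

section Stmt12Aux

variable {n : ℕ}

private lemma exists_eigvec {K : Type*} [Field K] {A : Matrix (Fin n) (Fin n) K} {μ : K}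
    (h : μ ∈ spectrum K A) : ∃ v : Fin n → K, v ≠ 0 ∧ A *ᵥ v = μ • v := by
  rw [spectrum.mem_iff, Algebra.algebraMap_eq_smul_one] at h
  have hdet : (μ • (1 : Matrix (Fin n) (Fin n) K) - A).det = 0 := by
    by_contra hd
    exact h ((Matrix.isUnit_iff_isUnit_det _).mpr (isUnit_iff_ne_zero.mpr hd))
  obtain ⟨v, hv0, hv⟩ := Matrix.exists_mulVec_eq_zero_iff.mpr hdet
  refine ⟨v, hv0, ?_⟩
  rw [sub_mulVec, smul_mulVec, one_mulVec, sub_eq_zero] at hv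
  exact hv.symm

private lemma re_form (A : Matrix (Fin n) (Fin n) ℝ) (v : Fin n → ℂ) :
    (star v ⬝ᵥ (A.map (algebraMap ℝ ℂ)) *ᵥ v).re
      = (fun i => (v i).re) ⬝ᵥ A *ᵥ (fun i => (v i).re)
        + (fun i => (v i).im) ⬝ᵥ A *ᵥ (fun i => (v i).im) := by
  simp only [dotProduct, mulVec, Pi.star_apply]
  rw [← Finset.sum_add_distrib, Complex.re_sum]
  refine Finset.sum_congr rfl fun i _ => ?_
  rw [Finset.mul_sum, Complex.re_sum, Finset.mul_sum, Finset.mul_sum, ← Finset.sum_add_distrib]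
  refine Finset.sum_congr rfl fun j _ => ?_
  simp only [Matrix.map_apply, Complex.star_def, Complex.mul_re, Complex.conj_re, Complex.conj_im,
    Complex.mul_im, Complex.ofReal_re, Complex.ofReal_im, Complex.coe_algebraMap]
  ring

private lemma psd_smul_one_sub {A : Matrix (Fin n) (Fin n) ℝ} (hA : A.IsHermitian) {c : ℝ}
    (hc : ∀ i, hA.eigenvalues i ≤ c) :
    (c • (1 : Matrix (Fin n) (Fin n) ℝ) - A).PosSemidef := by
  have hU : (hA.eigenvectorUnitary : Matrix (Fin n) (Fin n) ℝ) *
      star (hA.eigenvectorUnitary : Matrix (Fin n) (Fin n) ℝ) = 1 :=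
    Matrix.mem_unitaryGroup_iff.mp hA.eigenvectorUnitary.2
  have hd : diagonal (fun i => c - hA.eigenvalues i)
      = c • (1 : Matrix (Fin n) (Fin n) ℝ) - diagonal (RCLike.ofReal ∘ hA.eigenvalues) := by
    rw [smul_one_eq_diagonal, ← diagonal_sub]
    congr 1
  have key : c • (1 : Matrix (Fin n) (Fin n) ℝ) - A
      = (hA.eigenvectorUnitary : Matrix (Fin n) (Fin n) ℝ) *
          diagonal (fun i => c - hA.eigenvalues i) *
          (hA.eigenvectorUnitary : Matrix (Fin n) (Fin n) ℝ)ᴴ := by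
    conv_lhs => rw [hA.spectral_theorem, Unitary.conjStarAlgAut_apply]
    rw [hd, ← Matrix.star_eq_conjTranspose, Matrix.mul_sub, Matrix.sub_mul, mul_smul_comm,
      Matrix.mul_one, smul_mul_assoc, hU]
  rw [key]
  exact (Matrix.PosSemidef.diagonal (fun i => sub_nonneg.mpr (hc i))).mul_mul_conjTranspose_same _

private lemma psd_sub_smul_one {A : Matrix (Fin n) (Fin n) ℝ} (hA : A.IsHermitian) {c : ℝ}
    (hc : ∀ i, c ≤ hA.eigenvalues i) :
    (A - c • (1 : Matrix (Fin n) (Fin n) ℝ)).PosSemidef := by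
  have hU : (hA.eigenvectorUnitary : Matrix (Fin n) (Fin n) ℝ) *
      star (hA.eigenvectorUnitary : Matrix (Fin n) (Fin n) ℝ) = 1 :=
    Matrix.mem_unitaryGroup_iff.mp hA.eigenvectorUnitary.2
  have hd : diagonal (fun i => hA.eigenvalues i - c)
      = diagonal (RCLike.ofReal ∘ hA.eigenvalues) - c • (1 : Matrix (Fin n) (Fin n) ℝ) := by
    rw [smul_one_eq_diagonal, ← diagonal_sub]
    congr 1
  have key : A - c • (1 : Matrix (Fin n) (Fin n) ℝ)
      = (hA.eigenvectorUnitary : Matrix (Fin n) (Fin n) ℝ) *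
          diagonal (fun i => hA.eigenvalues i - c) *
          (hA.eigenvectorUnitary : Matrix (Fin n) (Fin n) ℝ)ᴴ := by
    conv_lhs => rw [hA.spectral_theorem, Unitary.conjStarAlgAut_apply]
    rw [hd, ← Matrix.star_eq_conjTranspose, Matrix.mul_sub, Matrix.sub_mul, mul_smul_comm,
      Matrix.mul_one, smul_mul_assoc, hU]
  rw [key]
  exact (Matrix.PosSemidef.diagonal (fun i => sub_nonneg.mpr (hc i))).mul_mul_conjTranspose_same _

private lemma quad_le {A : Matrix (Fin n) (Fin n) ℝ} (hA : A.IsHermitian) {c : ℝ}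
    (hc : ∀ i, hA.eigenvalues i ≤ c) (x : Fin n → ℝ) :
    x ⬝ᵥ A *ᵥ x ≤ c * (x ⬝ᵥ x) := by
  have h := (psd_smul_one_sub hA hc).dotProduct_mulVec_nonneg x
  rw [star_trivial, sub_mulVec, dotProduct_sub, smul_mulVec, one_mulVec,
    dotProduct_smul] at h
  simp only [smul_eq_mul] at h
  linarith

private lemma quad_ge {A : Matrix (Fin n) (Fin n) ℝ} (hA : A.IsHermitian) {c : ℝ}
    (hc : ∀ i, c ≤ hA.eigenvalues i) (x : Fin n → ℝ) :
    c * (x ⬝ᵥ x) ≤ x ⬝ᵥ A *ᵥ x := by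
  have h := (psd_sub_smul_one hA hc).dotProduct_mulVec_nonneg x
  rw [star_trivial, sub_mulVec, dotProduct_sub, smul_mulVec, one_mulVec,
    dotProduct_smul] at h
  simp only [smul_eq_mul] at h
  linarith

private lemma dot_self_pos {x : Fin n → ℝ} (hx : x ≠ 0) : 0 < x ⬝ᵥ x := by
  have h0 : 0 ≤ x ⬝ᵥ x := Finset.sum_nonneg fun i _ => mul_self_nonneg _
  rcases h0.lt_or_eq with h | h
  · exact h
  · exact absurd (dotProduct_self_eq_zero.mp h.symm) hx

end Stmt12Aux

/-- If `Q ≻ 0`, `P ⪰ 0` and `P ⪰ Q + MᵀPM`, then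
`λ_max(P) ≥ λ_min(Q) > 0` and `ρ(M)² ≤ 1 − λ_min(Q)/λ_max(P)`; in particular `ρ(M) < 1`. -/
theorem stmt12 (n : ℕ) (hn : 0 < n)
    (M Q P : Matrix (Fin n) (Fin n) ℝ)
    (hQ : Q.PosDef) (hP : P.PosSemidef)
    (hLyap : (P - Q - Mᵀ * P * M).PosSemidef) :
    eigMin Q ≤ eigMax P ∧ 0 < eigMin Q ∧
    specRad M ^ 2 ≤ 1 - eigMin Q / eigMax P ∧
    specRad M < 1 := by
  classical
  have hfinQ : (spectrum ℝ Q).Finite := Q.finite_spectrum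
  have hfinP : (spectrum ℝ P).Finite := P.finite_spectrum
  have hQne : (spectrum ℝ Q).Nonempty := ⟨_, hQ.1.eigenvalues_mem_spectrum_real ⟨0, hn⟩⟩
  have hPne : (spectrum ℝ P).Nonempty := ⟨_, hP.1.eigenvalues_mem_spectrum_real ⟨0, hn⟩⟩
  -- eigMin Q is positive
  have hminmem : eigMin Q ∈ spectrum ℝ Q := hQne.csInf_mem hfinQ
  have hminQ_pos : 0 < eigMin Q := by
    obtain ⟨v, hv0, hv⟩ := exists_eigvec hminmem
    have h1 : 0 < v ⬝ᵥ Q *ᵥ v := by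
      have := hQ.dotProduct_mulVec_pos hv0; rwa [star_trivial] at this
    have h2 : 0 < v ⬝ᵥ v := dot_self_pos hv0
    rw [hv, dotProduct_smul, smul_eq_mul] at h1
    by_contra hle
    push_neg at hle
    nlinarith
  -- eigenvalue bounds
  have hbQ : ∀ i, eigMin Q ≤ hQ.1.eigenvalues i := fun i =>
    csInf_le hfinQ.bddBelow (hQ.1.eigenvalues_mem_spectrum_real i)
  have hbP : ∀ i, hP.1.eigenvalues i ≤ eigMax P := fun i =>
    le_csSup hfinP.bddAbove (hP.1.eigenvalues_mem_spectrum_real i)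
  have hQlow : ∀ x : Fin n → ℝ, eigMin Q * (x ⬝ᵥ x) ≤ x ⬝ᵥ Q *ᵥ x := quad_ge hQ.1 hbQ
  have hPhigh : ∀ x : Fin n → ℝ, x ⬝ᵥ P *ᵥ x ≤ eigMax P * (x ⬝ᵥ x) := quad_le hP.1 hbP
  have hPpos : ∀ x : Fin n → ℝ, 0 ≤ x ⬝ᵥ P *ᵥ x := fun x => by
    have := hP.dotProduct_mulVec_nonneg x; rwa [star_trivial] at this
  have hLy : ∀ x : Fin n → ℝ,
      x ⬝ᵥ Q *ᵥ x + x ⬝ᵥ (Mᵀ * P * M) *ᵥ x ≤ x ⬝ᵥ P *ᵥ x := fun x => by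
    have h := hLyap.dotProduct_mulVec_nonneg x
    rw [star_trivial, sub_mulVec, sub_mulVec, dotProduct_sub, dotProduct_sub] at h
    linarith
  have hMPM : ∀ x : Fin n → ℝ, 0 ≤ x ⬝ᵥ (Mᵀ * P * M) *ᵥ x := fun x => by
    have hMt : Mᴴ = Mᵀ := Matrix.ext fun i j => star_trivial _
    have h := (hP.conjTranspose_mul_mul_same M).dotProduct_mulVec_nonneg x
    rw [star_trivial, hMt] at h
    exact h
  -- eigMin Q ≤ eigMax P
  have key1 : eigMin Q ≤ eigMax P := by
    set x : Fin n → ℝ := Pi.single ⟨0, hn⟩ 1 with hxdef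
    have hx : x ≠ 0 := by
      intro h
      have := congr_fun h ⟨0, hn⟩
      simp [hxdef] at this
    have hxx := dot_self_pos hx
    have h1 := hQlow x
    have h2 := hPhigh x
    have h3 := hLy x
    have h4 := hMPM x
    nlinarith
  have hmaxP_pos : 0 < eigMax P := lt_of_lt_of_le hminQ_pos key1
  -- main spectral bound
  have hbound : ∀ μ ∈ spectrum ℂ (M.map (algebraMap ℝ ℂ)),
      ‖μ‖ ^ 2 ≤ 1 - eigMin Q / eigMax P := by
    intro μ hμ
    obtain ⟨v, hv0, hv⟩ := exists_eigvec hμ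
    set a : Fin n → ℝ := fun i => (v i).re with ha
    set b : Fin n → ℝ := fun i => (v i).im with hb
    have hs : 0 < a ⬝ᵥ a + b ⬝ᵥ b := by
      obtain ⟨i, hi⟩ := Function.ne_iff.mp hv0
      have hpos : 0 < Complex.normSq (v i) := Complex.normSq_pos.mpr hi
      have hrw : a ⬝ᵥ a + b ⬝ᵥ b = ∑ j, (a j * a j + b j * b j) := by
        simp [dotProduct, Finset.sum_add_distrib]
      rw [hrw]
      refine Finset.sum_pos' (fun j _ => add_nonneg (mul_self_nonneg _) (mul_self_nonneg _)) ⟨i, Finset.mem_univ i, ?_⟩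
      simpa [ha, hb, Complex.normSq_apply] using hpos
    have hTform : a ⬝ᵥ (Mᵀ * P * M) *ᵥ a + b ⬝ᵥ (Mᵀ * P * M) *ᵥ b
        = ‖μ‖ ^ 2 * (a ⬝ᵥ P *ᵥ a + b ⬝ᵥ P *ᵥ b) := by
      rw [← re_form, ← re_form]
      have hmap : (Mᵀ * P * M).map (algebraMap ℝ ℂ)
          = (M.map (algebraMap ℝ ℂ))ᴴ * P.map (algebraMap ℝ ℂ) * M.map (algebraMap ℝ ℂ) := by
        rw [Matrix.map_mul, Matrix.map_mul]
        congr 1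
        congr 1
        ext i j
        simp [Complex.conj_ofReal]
      rw [hmap, ← mulVec_mulVec, ← mulVec_mulVec, dotProduct_mulVec, ← star_mulVec, hv,
        star_smul, smul_dotProduct, mulVec_smul, dotProduct_smul, smul_eq_mul, smul_eq_mul,
        ← mul_assoc]
      have hc : (star μ) * μ = ((‖μ‖ ^ 2 : ℝ) : ℂ) := by
        rw [Complex.star_def, mul_comm, Complex.mul_conj]
        norm_cast
        rw [Complex.normSq_eq_norm_sq]
      rw [hc, Complex.re_ofReal_mul]
    set p := a ⬝ᵥ P *ᵥ a + b ⬝ᵥ P *ᵥ b with hp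
    set q := a ⬝ᵥ Q *ᵥ a + b ⬝ᵥ Q *ᵥ b with hq
    have h1 : eigMin Q * (a ⬝ᵥ a + b ⬝ᵥ b) ≤ q := by
      have := hQlow a; have := hQlow b; rw [hq]; ring_nf; nlinarith
    have h2 : p ≤ eigMax P * (a ⬝ᵥ a + b ⬝ᵥ b) := by
      have := hPhigh a; have := hPhigh b; rw [hp]; ring_nf; nlinarith
    have h3 : q + ‖μ‖ ^ 2 * p ≤ p := by
      have hA := hLy a; have hB := hLy b
      rw [hq, hp, ← hTform]; linarith
    have hp0 : 0 ≤ p := by have := hPpos a; have := hPpos b; rw [hp]; linarith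
    have hq0 : 0 < q := lt_of_lt_of_le (mul_pos hminQ_pos hs) h1
    have h4 : 0 < 1 - ‖μ‖ ^ 2 := by nlinarith
    have h6 : eigMin Q ≤ (1 - ‖μ‖ ^ 2) * eigMax P := by
      have h5 : eigMin Q * (a ⬝ᵥ a + b ⬝ᵥ b)
          ≤ ((1 - ‖μ‖ ^ 2) * eigMax P) * (a ⬝ᵥ a + b ⬝ᵥ b) := by nlinarith
      exact le_of_mul_le_mul_right h5 hs
    have h7 : eigMin Q / eigMax P ≤ 1 - ‖μ‖ ^ 2 := (div_le_iff₀ hmaxP_pos).mpr h6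
    linarith
  have hr1 : eigMin Q / eigMax P ≤ 1 := (div_le_one hmaxP_pos).mpr key1
  have hr0 : 0 < eigMin Q / eigMax P := div_pos hminQ_pos hmaxP_pos
  have hrho : specRad M ^ 2 ≤ 1 - eigMin Q / eigMax P := by
    by_cases hne : (spectrum ℂ (M.map (algebraMap ℝ ℂ))).Nonempty
    · have hSfin : ((fun μ : ℂ => ‖μ‖) '' spectrum ℂ (M.map (algebraMap ℝ ℂ))).Finite :=
        (Matrix.finite_spectrum _).image _
      have hSne := hne.image (fun μ : ℂ => ‖μ‖)
      have hub : specRad M ≤ Real.sqrt (1 - eigMin Q / eigMax P) := by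
        refine csSup_le hSne ?_
        rintro y ⟨μ, hμ, rfl⟩
        exact Real.le_sqrt_of_sq_le (hbound μ hμ)
      have hlb : 0 ≤ specRad M := by
        obtain ⟨μ, hμ⟩ := hne
        exact le_trans (norm_nonneg μ) (le_csSup hSfin.bddAbove ⟨μ, hμ, rfl⟩)
      calc specRad M ^ 2 ≤ Real.sqrt (1 - eigMin Q / eigMax P) ^ 2 :=
            pow_le_pow_left₀ hlb hub 2
        _ = 1 - eigMin Q / eigMax P := Real.sq_sqrt (by linarith)
    · rw [specRad, Set.not_nonempty_iff_eq_empty.mp hne, Set.image_empty, Real.sSup_empty]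
      norm_num
      linarith
  refine ⟨key1, hminQ_pos, hrho, ?_⟩
  have hsq : specRad M ^ 2 < 1 := by linarith
  exact lt_of_le_of_lt (le_abs_self _) ((sq_lt_one_iff_abs_lt_one _).mp hsq)
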